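/- Let k, T ∈ ℕ with k ≥ 1 and let p be a real with 1/(2k) ≤ p ≤ 1/k. Under the product Bernoulli(p) probability measure on ω : Fin T → Fin k → Bool (all T·k coordinates independent, each true with probability p), the probability that there is NO round t ∈ Fin T in which process 0 transmits alone (i.e., ω t 0 = true and ω t j = false for all j ≠ 0) is at most exp(−T/(2·e·k)). (This is the probabilistic core of the Decay-based acknowledgment protocol: over T = Θ(k log n) rounds a fixed sender facing contention k is heard by a fixed neighbor with high probability.) -/

import Mathlib

open MeasureTheory

/-- The Bernoulli(p) measure on `Bool`: `true` has mass `p`, `false` has mass `1 - p`. -/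
noncomputable def bernoulliMeasure (p : ℝ) : Measure Bool :=
  ENNReal.ofReal p • Measure.dirac true + ENNReal.ofReal (1 - p) • Measure.dirac false

/-- The product Bernoulli(p) measure on `Fin T → Fin k → Bool`: all `T·k`
coordinates are independent, each `true` with probability `p`; `ω t j`
indicates whether process `j` transmits in round `t`. -/
noncomputable def decayMeasure (T k : ℕ) (p : ℝ) : Measure (Fin T → Fin k → Bool) :=
  Measure.pi fun _ : Fin T => Measure.pi fun _ : Fin k => bernoulliMeasure p

/-! In each round process `0` transmits alone with probability `q = p (1 - p)^(k-1)`, and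
`p ≤ 1/k` gives `(1 - p)^(k-1) ≥ (1 - 1/k)^(k-1) ≥ 1/e`, so `q ≥ 1/(2ek)`. The rounds are
independent, hence no solo round occurs with probability `(1 - q)^T ≤ exp (-qT)`. -/

open Finset

instance (p : ℝ) : IsFiniteMeasure (bernoulliMeasure p) := by
  constructor
  simp [bernoulliMeasure]

lemma bernoulliMeasure_singleton (p : ℝ) (b : Bool) :
    bernoulliMeasure p {b} = ENNReal.ofReal (cond b p (1 - p)) := by
  cases b <;> simp [bernoulliMeasure]

lemma isProbabilityMeasure_bernoulliMeasure {p : ℝ} (h0 : 0 ≤ p) (h1 : p ≤ 1) :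
    IsProbabilityMeasure (bernoulliMeasure p) := by
  constructor
  simp [bernoulliMeasure, ← ENNReal.ofReal_add h0 (sub_nonneg.2 h1)]

lemma pi_bernoulliMeasure_singleton {ι : Type*} [Fintype ι] (p : ℝ) (x : ι → Bool) :
    Measure.pi (fun _ : ι => bernoulliMeasure p) {x} =
      ∏ i, ENNReal.ofReal (cond (x i) p (1 - p)) := by
  rw [← Set.univ_pi_singleton, Measure.pi_pi]
  simp only [bernoulliMeasure_singleton]

def soloPattern {ι : Type*} [DecidableEq ι] (i : ι) : ι → Bool := fun j => decide (j = i)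

lemma eq_soloPattern_iff {ι : Type*} [DecidableEq ι] {i : ι} {f : ι → Bool} :
    f = soloPattern i ↔ f i = true ∧ ∀ j, j ≠ i → f j = false := by
  constructor
  · rintro rfl
    simp [soloPattern]
  · rintro ⟨hi, hne⟩
    funext j
    by_cases h : j = i
    · simp [soloPattern, h, hi]
    · simp [soloPattern, h, hne j h]

lemma pi_bernoulliMeasure_soloPattern {ι : Type*} [Fintype ι] [DecidableEq ι] {p : ℝ}
    (h0 : 0 ≤ p) (h1 : p ≤ 1) (i : ι) :
    Measure.pi (fun _ : ι => bernoulliMeasure p) {soloPattern i} =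
      ENNReal.ofReal (p * (1 - p) ^ (Fintype.card ι - 1)) := by
  have hcompl : ∀ j ∈ ({i}ᶜ : Finset ι),
      ENNReal.ofReal (cond (soloPattern i j) p (1 - p)) = ENNReal.ofReal (1 - p) := by
    intro j hj
    simp_all [soloPattern]
  rw [pi_bernoulliMeasure_singleton, Fintype.prod_eq_mul_prod_compl i, prod_congr rfl hcompl,
    prod_const, card_compl, card_singleton, ENNReal.ofReal_mul h0,
    ENNReal.ofReal_pow (sub_nonneg.2 h1)]
  simp [soloPattern]

lemma pi_setOf_forall_notMem {ι β : Type*} [Fintype ι] [MeasurableSpace β] (ν : Measure β)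
    [IsProbabilityMeasure ν] {S : Set β} (hS : MeasurableSet S) :
    Measure.pi (fun _ : ι => ν) {ω | ∀ i, ω i ∉ S} = (1 - ν S) ^ Fintype.card ι := by
  have : {ω : ι → β | ∀ i, ω i ∉ S} = Set.univ.pi fun _ => Sᶜ := by ext; simp
  rw [this, Measure.pi_pi, prob_compl_eq_one_sub hS, prod_const, card_univ]

lemma exp_neg_one_le_one_sub_pow {n : ℕ} {p : ℝ} (hp : p ≤ 1 / (n + 1)) :
    Real.exp (-1) ≤ (1 - p) ^ n := by
  calc Real.exp (-1) ≤ ((1 + (n : ℝ)⁻¹) ^ n)⁻¹ := by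
        rw [Real.exp_neg]
        exact inv_anti₀ (by positivity) Real.one_add_inv_pow_le_exp
    _ = (1 - 1 / (n + 1)) ^ n := by
        rcases n.eq_zero_or_pos with rfl | hn
        · simp
        · rw [← inv_pow]
          field_simp
          ring
    _ ≤ (1 - p) ^ n := by
        gcongr
        rw [sub_nonneg, div_le_one (by positivity)]
        linarith [n.cast_nonneg (α := ℝ)]

lemma one_div_two_exp_mul_le_mul_one_sub_pow {k : ℕ} (hk : 1 ≤ k) {p : ℝ}
    (hp1 : 1 / (2 * k) ≤ p) (hp2 : p ≤ 1 / k) :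
    1 / (2 * Real.exp 1 * k) ≤ p * (1 - p) ^ (k - 1) := by
  have hkpos : (0 : ℝ) < k := by exact_mod_cast hk
  have hpow : Real.exp (-1) ≤ (1 - p) ^ (k - 1) :=
    exp_neg_one_le_one_sub_pow (by rwa [Nat.cast_sub hk, Nat.cast_one, sub_add_cancel])
  calc 1 / (2 * Real.exp 1 * k) = 1 / (2 * k) * Real.exp (-1) := by
        rw [Real.exp_neg]; field_simp
    _ ≤ p * (1 - p) ^ (k - 1) :=
        mul_le_mul hp1 hpow (Real.exp_nonneg _) (le_trans (by positivity) hp1)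

lemma one_sub_pow_le_exp_neg_mul {q : ℝ} (hq : q ≤ 1) (n : ℕ) :
    (1 - q) ^ n ≤ Real.exp (-(n * q)) := by
  calc (1 - q) ^ n ≤ Real.exp (-q) ^ n :=
        pow_le_pow_left₀ (sub_nonneg.2 hq) (Real.one_sub_le_exp_neg q) n
    _ = Real.exp (-(n * q)) := by rw [← Real.exp_nat_mul, mul_neg]

/-- **Probabilistic core of the Decay-based acknowledgment protocol.**
For `k ≥ 1` and `1/(2k) ≤ p ≤ 1/k`, under the product Bernoulli(p) measure on
`Fin T → Fin k → Bool`, the probability that in no round does process `0`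
transmit alone is at most `exp(−T/(2·e·k))`. -/
theorem decay_no_solo_round_probability (k T : ℕ) (hk : 1 ≤ k) (p : ℝ)
    (hp1 : 1 / (2 * k) ≤ p) (hp2 : p ≤ 1 / k) :
    decayMeasure T k p
        {ω | ¬ ∃ t : Fin T, ω t ⟨0, hk⟩ = true ∧
          ∀ j : Fin k, j ≠ ⟨0, hk⟩ → ω t j = false} ≤
      ENNReal.ofReal (Real.exp (-((T : ℝ) / (2 * Real.exp 1 * k)))) := by
  have hp0 : 0 ≤ p := le_trans (by positivity) hp1
  have hp_le_one : p ≤ 1 := hp2.trans (div_le_one_of_le₀ (by exact_mod_cast hk) (by positivity))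
  have := isProbabilityMeasure_bernoulliMeasure hp0 hp_le_one
  set q := p * (1 - p) ^ (k - 1)
  have hq0 : 0 ≤ q := mul_nonneg hp0 (pow_nonneg (sub_nonneg.2 hp_le_one) _)
  have hq1 : q ≤ 1 := mul_le_one₀ hp_le_one (pow_nonneg (sub_nonneg.2 hp_le_one) _)
    (pow_le_one₀ (sub_nonneg.2 hp_le_one) (by linarith))
  have hevent : {ω : Fin T → Fin k → Bool | ¬ ∃ t : Fin T, ω t ⟨0, hk⟩ = true ∧
      ∀ j : Fin k, j ≠ ⟨0, hk⟩ → ω t j = false} =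
      {ω | ∀ t, ω t ∉ ({soloPattern ⟨0, hk⟩} : Set (Fin k → Bool))} := by
    ext ω
    simp [eq_soloPattern_iff]
  rw [hevent, decayMeasure, pi_setOf_forall_notMem _ (measurableSet_singleton _),
    pi_bernoulliMeasure_soloPattern hp0 hp_le_one, Fintype.card_fin, Fintype.card_fin,
    ← ENNReal.ofReal_one, ← ENNReal.ofReal_sub _ hq0, ← ENNReal.ofReal_pow (by linarith)]
  refine ENNReal.ofReal_le_ofReal ((one_sub_pow_le_exp_neg_mul hq1 T).trans ?_)
  gcongr
  rw [div_eq_mul_one_div]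
  exact mul_le_mul_of_nonneg_left (one_div_two_exp_mul_le_mul_one_sub_pow hk hp1 hp2) T.cast_nonneg
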